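/- Let F be a field of characteristic zero, V an n-dimensional F-vector space, F'/F an extension, and W ⊆ V ⊗_F F' a line whose conjugates under Aut(F'/F) span V ⊗_F F'. Suppose a subgroup Γ ⊆ GL(V) (acting F'-linearly on V ⊗_F F') stabilizes W, and suppose that the centralizer in End_F(V) of the F-subalgebra generated by Γ stabilizes W as well. Then the stabilizer K of W in End_F(V) is a field with [K : F] = n, and hence [F(W) : F] = n. -/

import Mathlib

/-!
The eigenvalue of `φ ∈ K` on the line `W = F' ∙ u` is an `F`-algebra map `K → F'`. It is injective:
an endomorphism killing `W` kills every `Aut(F'/F)`-conjugate of `W`, hence all of `F' ⊗ V`. So `K`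
embeds in `F'` as a finite-dimensional subalgebra, hence is a field. As `K ⊇ Γ`, the centralizer of
`K` lies in `K`; a `K`-linear projection of `V` onto a line `K v` is then a scalar, so `V` is
one-dimensional over `K` and `[K : F] = n`. Normalising a coordinate of `u` to `1`, every eigenvalue
is an `F`-combination of the coordinates of `u`, and counting dimensions the eigenvalues are exactly
their span. So `W` is defined over the image of `K`, which lies in `M`: the image is `F(W) = M`.
-/

open TensorProduct

/-- `W` is defined over the intermediate field `M` of `F'/F`. -/
def IsDefinedOver (F F' : Type*) [Field F] [Field F'] [Algebra F F']
    (V : Type*) [AddCommGroup V] [Module F V]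
    (M : IntermediateField F F') (W : Submodule F' (F' ⊗[F] V)) : Prop :=
  ∃ w : ↥M ⊗[F] V,
    W = Submodule.span F' {LinearMap.rTensor V M.val.toLinearMap w}

open Module Submodule

section Stabilizer

variable {F F' V : Type*} [Field F] [Field F'] [Algebra F F'] [AddCommGroup V] [Module F V]

def baseChangeStabilizer (W : Submodule F' (F' ⊗[F] V)) : Subalgebra F (Module.End F V) where
  carrier := {φ | ∀ x ∈ W, φ.baseChange F' x ∈ W}
  mul_mem' ha hb x hx := by
    rw [LinearMap.baseChange_mul, Module.End.mul_apply]
    exact ha _ (hb _ hx)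
  one_mem' x hx := by rwa [LinearMap.baseChange_one]
  add_mem' ha hb x hx := by
    rw [LinearMap.baseChange_add, LinearMap.add_apply]
    exact W.add_mem (ha _ hx) (hb _ hx)
  zero_mem' x _ := by
    rw [LinearMap.baseChange_zero, LinearMap.zero_apply]
    exact W.zero_mem
  algebraMap_mem' r x hx := by
    rw [Algebra.algebraMap_eq_smul_one, LinearMap.baseChange_smul, LinearMap.baseChange_one]
    exact W.smul_of_tower_mem r hx

theorem baseChange_rTensor_comm (φ : Module.End F V) (σ : F' →ₗ[F] F') (x : F' ⊗[F] V) :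
    φ.baseChange F' (σ.rTensor V x) = σ.rTensor V (φ.baseChange F' x) := by
  simp only [LinearMap.baseChange_eq_ltensor]
  rw [← LinearMap.comp_apply, LinearMap.lTensor_comp_rTensor, ← LinearMap.rTensor_comp_lTensor]
  rfl

theorem eq_zero_of_forall_baseChange_eq_zero {W : Submodule F' (F' ⊗[F] V)}
    (hspan : span F' (⋃ σ : F' ≃ₐ[F] F', σ.toLinearMap.rTensor V '' (W : Set (F' ⊗[F] V))) = ⊤)
    {χ : Module.End F V} (hχ : ∀ x ∈ W, χ.baseChange F' x = 0) : χ = 0 := by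
  have hker : span F' (⋃ σ : F' ≃ₐ[F] F', σ.toLinearMap.rTensor V '' (W : Set (F' ⊗[F] V))) ≤
      LinearMap.ker (χ.baseChange F') := by
    refine span_le.2 ?_
    rintro _ ⟨_, ⟨σ, rfl⟩, x, hx, rfl⟩
    simp [baseChange_rTensor_comm, hχ x hx]
  rw [hspan, top_le_iff, LinearMap.ker_eq_top] at hker
  exact LinearMap.baseChangeHom_injective F V F' (by simpa using hker)

end Stabilizer

section LineEigenvalue

variable {F F' V : Type*} [Field F] [Field F'] [Algebra F F'] [AddCommGroup V] [Module F V]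
  (w : F' ⊗[F] V)

theorem exists_smul_eq_baseChange (φ : baseChangeStabilizer (F' ∙ w)) :
    ∃ c : F', c • w = (φ : Module.End F V).baseChange F' w :=
  mem_span_singleton.1 (φ.2 w (mem_span_singleton_self w))

noncomputable def lineEigenvalue (φ : baseChangeStabilizer (F' ∙ w)) : F' :=
  (exists_smul_eq_baseChange w φ).choose

theorem lineEigenvalue_smul (φ : baseChangeStabilizer (F' ∙ w)) :
    lineEigenvalue w φ • w = (φ : Module.End F V).baseChange F' w :=
  (exists_smul_eq_baseChange w φ).choose_spec

variable {w}

theorem lineEigenvalue_eq_of_smul_eq (hw : w ≠ 0) {φ : baseChangeStabilizer (F' ∙ w)} {c : F'}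
    (h : c • w = (φ : Module.End F V).baseChange F' w) : lineEigenvalue w φ = c :=
  smul_left_injective F' hw ((lineEigenvalue_smul w φ).trans h.symm)

noncomputable def lineEigenvalueAlgHom (hw : w ≠ 0) : baseChangeStabilizer (F' ∙ w) →ₐ[F] F' where
  toFun := lineEigenvalue w
  map_one' := lineEigenvalue_eq_of_smul_eq hw (by simp)
  map_mul' φ ψ := lineEigenvalue_eq_of_smul_eq hw <| by
    rw [Subalgebra.coe_mul, LinearMap.baseChange_mul, Module.End.mul_apply,
      ← lineEigenvalue_smul w ψ, map_smul, ← lineEigenvalue_smul w φ, smul_smul, mul_comm]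
  map_zero' := lineEigenvalue_eq_of_smul_eq hw (by simp)
  map_add' φ ψ := lineEigenvalue_eq_of_smul_eq hw <| by
    rw [Subalgebra.coe_add, LinearMap.baseChange_add, LinearMap.add_apply,
      ← lineEigenvalue_smul w φ, ← lineEigenvalue_smul w ψ, add_smul]
  commutes' r := lineEigenvalue_eq_of_smul_eq hw <| by
    rw [Subalgebra.coe_algebraMap, Algebra.algebraMap_eq_smul_one (A := Module.End F V),
      LinearMap.baseChange_smul, LinearMap.baseChange_one, LinearMap.smul_apply,
      Module.End.one_apply, algebraMap_smul]

theorem lineEigenvalueAlgHom_injective (hw : w ≠ 0)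
    (hspan : span F' (⋃ σ : F' ≃ₐ[F] F',
      σ.toLinearMap.rTensor V '' ((F' ∙ w : Submodule F' (F' ⊗[F] V)) : Set (F' ⊗[F] V))) = ⊤) :
    Function.Injective (lineEigenvalueAlgHom hw) := by
  refine (injective_iff_map_eq_zero _).2 fun φ hφ => Subtype.ext ?_
  refine eq_zero_of_forall_baseChange_eq_zero hspan fun x hx => ?_
  obtain ⟨c, rfl⟩ := mem_span_singleton.1 hx
  rw [map_smul, ← lineEigenvalue_smul]
  simp [show lineEigenvalue w φ = 0 from hφ]

end LineEigenvalue

theorem finrank_eq_one_of_forall_exists_eq_smul {K V : Type*} [Field K] [AddCommGroup V]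
    [Module K V] [Nontrivial V] (h : ∀ f : Module.End K V, ∃ c : K, ∀ v, f v = c • v) :
    finrank K V = 1 := by
  obtain ⟨v₀, hv₀⟩ := exists_ne (0 : V)
  obtain ⟨q, hq⟩ := (K ∙ v₀).exists_isCompl
  set p : Module.End K V := (K ∙ v₀).subtype ∘ₗ (K ∙ v₀).projectionOnto q hq
  have hp : p v₀ = v₀ := by simp [p, projectionOnto_apply_left hq ⟨v₀, mem_span_singleton_self v₀⟩]
  obtain ⟨c, hc⟩ := h p
  have hc1 : c = 1 := smul_left_injective K hv₀ <| show c • v₀ = 1 • v₀ by rw [← hc, hp, one_smul]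
  refine (finrank_eq_one_iff_of_nonzero' v₀ hv₀).2 fun v => mem_span_singleton.1 ?_
  have hv : p v ∈ K ∙ v₀ := ((K ∙ v₀).projectionOnto q hq v).2
  rwa [hc v, hc1, one_smul] at hv

theorem Subalgebra.finrank_eq_of_isField_of_centralizer_le {F V : Type*} [Field F]
    [AddCommGroup V] [Module F V] [FiniteDimensional F V] (K : Subalgebra F (Module.End F V))
    (hK : IsField K) (hcent : Subalgebra.centralizer F (K : Set (Module.End F V)) ≤ K) :
    finrank F K = finrank F V := by
  let := hK.toField
  have : Nontrivial V := by
    by_contra! hV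
    exact hK.exists_pair_ne.elim fun a ha => ha.elim fun b hab => hab (Subsingleton.elim a b)
  have hV : finrank K V = 1 := finrank_eq_one_of_forall_exists_eq_smul fun f =>
    ⟨⟨f.restrictScalars F, hcent fun φ hφ => LinearMap.ext fun v => (f.map_smul ⟨φ, hφ⟩ v).symm⟩,
      fun v => rfl⟩
  rw [← Module.finrank_mul_finrank F K V, hV, mul_one]

theorem AlgHom.isField_range {F A E : Type*} [Field F] [Ring A] [Algebra F A]
    [FiniteDimensional F A] [Field E] [Algebra F E] (f : A →ₐ[F] E) : IsField f.range :=
  have : FiniteDimensional F f.range := f.toLinearMap.finiteDimensional_range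
  IsField.of_isDomain_of_finite F f.range

section Coordinates

variable {F F' V ι : Type*} [Field F] [Field F'] [Algebra F F'] [AddCommGroup V] [Module F V]
  [Fintype ι] (e : Basis ι F V)

theorem repr_baseChange_mem_span (φ : Module.End F V) (x : F' ⊗[F] V) (k : ι) :
    (e.baseChange F').repr (φ.baseChange F' x) k ∈
      span F (Set.range ((e.baseChange F').repr x)) := by
  classical
  rw [← LinearMap.toMatrix_mulVec_repr (e.baseChange F') (e.baseChange F'), Matrix.mulVec,
    dotProduct]
  refine sum_mem fun i _ => ?_
  rw [LinearMap.toMatrix_apply, Basis.baseChange_apply, LinearMap.baseChange_tmul,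
    Basis.baseChange_repr_tmul, smul_mul_assoc, one_mul]
  exact smul_mem _ _ (subset_span ⟨i, rfl⟩)

theorem mem_range_rTensor_iff (L : IntermediateField F F') (x : F' ⊗[F] V) :
    x ∈ LinearMap.range (L.val.toLinearMap.rTensor V) ↔ ∀ k, (e.baseChange F').repr x k ∈ L := by
  constructor
  · rintro ⟨y, rfl⟩ k
    induction y using TensorProduct.induction_on with
    | zero => simp
    | tmul a v => simpa using L.smul_mem a.2 (x := e.repr v k)
    | add y z hy hz => simpa using L.add_mem hy hz
  · intro hx
    refine ⟨∑ k, (⟨_, hx k⟩ : L) ⊗ₜ[F] e k, ?_⟩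
    conv_rhs => rw [← (e.baseChange F').sum_repr x]
    simp [TensorProduct.smul_tmul']

theorem exists_normalized_generator {L : IntermediateField F F'} {x : F' ⊗[F] V}
    (hx : x ∈ LinearMap.range (L.val.toLinearMap.rTensor V)) (hx0 : x ≠ 0) :
    ∃ u ∈ LinearMap.range (L.val.toLinearMap.rTensor V), (F' ∙ u) = (F' ∙ x) ∧
      ∃ j, (e.baseChange F').repr u j = 1 := by
  obtain ⟨j, hj⟩ : ∃ j, (e.baseChange F').repr x j ≠ 0 := by
    by_contra! h
    exact hx0 ((e.baseChange F').repr.map_eq_zero_iff.1 (Finsupp.ext h))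
  refine ⟨((e.baseChange F').repr x j)⁻¹ • x, ?_,
    span_singleton_smul_eq (IsUnit.mk0 _ (inv_ne_zero hj)) x, j, by simp [hj]⟩
  rw [mem_range_rTensor_iff e] at hx ⊢
  intro k
  simpa using L.mul_mem (L.inv_mem (hx j)) (hx k)

end Coordinates

section EigenvalueRange

variable {F F' V ι : Type*} [Field F] [Field F'] [Algebra F F'] [AddCommGroup V] [Module F V]
  [Fintype ι] (e : Basis ι F V) {u : F' ⊗[F] V} {j : ι}

theorem lineEigenvalue_mem_span (hu : (e.baseChange F').repr u j = 1)
    (φ : baseChangeStabilizer (F' ∙ u)) :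
    lineEigenvalue u φ ∈ span F (Set.range ((e.baseChange F').repr u)) := by
  have := repr_baseChange_mem_span e (φ : Module.End F V) u j
  rwa [← lineEigenvalue_smul, map_smul, Finsupp.smul_apply, hu, smul_eq_mul, mul_one] at this

theorem toSubmodule_range_lineEigenvalueAlgHom (hu : (e.baseChange F').repr u j = 1)
    (hu0 : u ≠ 0) (hinj : Function.Injective (lineEigenvalueAlgHom hu0))
    (hK : Fintype.card ι ≤ finrank F (baseChangeStabilizer (F' ∙ u))) :
    Subalgebra.toSubmodule (lineEigenvalueAlgHom hu0).range =
      span F (Set.range ((e.baseChange F').repr u)) := by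
  have := FiniteDimensional.span_of_finite F (Set.finite_range ((e.baseChange F').repr u))
  refine eq_of_le_of_finrank_le ?_ ?_
  · rintro _ ⟨φ, rfl⟩
    exact lineEigenvalue_mem_span e hu φ
  · calc finrank F (span F (Set.range ((e.baseChange F').repr u)))
        ≤ Fintype.card ι := finrank_range_le_card _
      _ ≤ finrank F (baseChangeStabilizer (F' ∙ u)) := hK
      _ = finrank F (lineEigenvalueAlgHom hu0).range :=
        (AlgEquiv.ofInjective _ hinj).toLinearEquiv.finrank_eq

theorem eq_toIntermediateField'_range_lineEigenvalueAlgHom [FiniteDimensional F V]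
    (hu : (e.baseChange F').repr u j = 1) (hu0 : u ≠ 0)
    (hinj : Function.Injective (lineEigenvalueAlgHom hu0))
    (hK : Fintype.card ι ≤ finrank F (baseChangeStabilizer (F' ∙ u)))
    {M : IntermediateField F F'} (huM : u ∈ LinearMap.range (M.val.toLinearMap.rTensor V))
    (hmin : ∀ M' : IntermediateField F F', IsDefinedOver F F' V M' (F' ∙ u) → M ≤ M') :
    M = (lineEigenvalueAlgHom hu0).range.toIntermediateField' (AlgHom.isField_range _) := by
  have hrange := toSubmodule_range_lineEigenvalueAlgHom e hu hu0 hinj hK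
  refine le_antisymm ?_ fun x hx =>
    (span_le (p := Subalgebra.toSubmodule M.toSubalgebra)).2
      (Set.range_subset_iff.2 ((mem_range_rTensor_iff e M u).1 huM)) (hrange ▸ hx)
  have hcoord (k : ι) : (e.baseChange F').repr u k ∈
      (lineEigenvalueAlgHom hu0).range.toIntermediateField' (AlgHom.isField_range _) := by
    change _ ∈ Subalgebra.toSubmodule (lineEigenvalueAlgHom hu0).range
    exact hrange ▸ subset_span ⟨k, rfl⟩
  obtain ⟨y, hy⟩ := (mem_range_rTensor_iff e _ u).2 hcoord
  exact hmin _ ⟨y, by rw [hy]⟩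

end EigenvalueRange

theorem stabilizer_degree_of_group_action_general
    (F F' : Type*) [Field F] [Field F'] [Algebra F F']
    (V : Type*) [AddCommGroup V] [Module F V] [FiniteDimensional F V]
    (n : ℕ) (hV : Module.finrank F V = n)
    (W : Submodule F' (F' ⊗[F] V))
    (hW : Module.finrank F' ↥W = 1)
    (hspan : Submodule.span F'
      (⋃ σ : F' ≃ₐ[F] F',
        (LinearMap.rTensor V σ.toLinearMap) '' (W : Set (F' ⊗[F] V))) = ⊤)
    (Γ : Subgroup (Module.End F V)ˣ)
    (hΓ : ∀ g ∈ Γ, ∀ x ∈ W, LinearMap.baseChange F' ((g : (Module.End F V)ˣ) : Module.End F V) x ∈ W)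
    (hcent : ∀ φ ∈ Subalgebra.centralizer F
        (Algebra.adjoin F ((fun g : (Module.End F V)ˣ => (g : Module.End F V)) ''
          (Γ : Set (Module.End F V)ˣ)) : Subalgebra F (Module.End F V)),
      ∀ x ∈ W, LinearMap.baseChange F' φ x ∈ W)
    (M : IntermediateField F F')
    (hdef : IsDefinedOver F F' V M W)
    (hmin : ∀ M' : IntermediateField F F', IsDefinedOver F F' V M' W → M ≤ M') :
    (∃ K : Subalgebra F (Module.End F V),
      (K : Set (Module.End F V)) =
        {φ : Module.End F V | ∀ x ∈ W, LinearMap.baseChange F' φ x ∈ W} ∧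
      IsField ↥K ∧ Module.finrank F ↥K = n) ∧
    Module.finrank F ↥M = n := by
  obtain ⟨w, rfl⟩ := hdef
  have hw0 : M.val.toLinearMap.rTensor V w ≠ 0 := by
    intro h
    rw [h, span_zero_singleton, finrank_bot] at hW
    exact zero_ne_one hW
  let e := finBasisOfFinrankEq F V hV
  obtain ⟨u, huM, hWu, j, hu⟩ := exists_normalized_generator e ⟨w, rfl⟩ hw0
  rw [← hWu] at hspan hΓ hcent hmin ⊢
  have hu0 : u ≠ 0 := by
    rintro rfl
    simp at hu
  set K := baseChangeStabilizer (F' ∙ u)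
  set ev := lineEigenvalueAlgHom hu0
  have hinj : Function.Injective ev := lineEigenvalueAlgHom_injective hu0 hspan
  have hKfield : IsField K := (AlgEquiv.ofInjective ev hinj).toMulEquiv.isField ev.isField_range
  have hKn : finrank F K = n := hV ▸ K.finrank_eq_of_isField_of_centralizer_le hKfield
    fun φ hφ => hcent φ (Subalgebra.centralizer_le F _ _
      (Algebra.adjoin_le (by rintro _ ⟨g, hg, rfl⟩; exact hΓ g hg)) hφ)
  have hM := eq_toIntermediateField'_range_lineEigenvalueAlgHom e hu hu0 hinj
    (by simpa using hKn.ge) huM hmin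
  refine ⟨⟨K, rfl, hKfield, hKn⟩, ?_⟩
  rw [hM, ← IntermediateField.finrank_eq_finrank_subalgebra, toSubalgebra_toIntermediateField',
    ← hKn]
  exact (AlgEquiv.ofInjective ev hinj).toLinearEquiv.finrank_eq.symm

/-- abstraction of the step (1) ⟹ (2) of Theorem 1.2: `F` characteristic
zero, `V` `n`-dimensional, `W ⊆ F' ⊗ V` a line whose `Aut(F'/F)`-conjugates span.  If a
subgroup `Γ ⊆ GL(V)` stabilizes `W` and the centralizer in `End_F(V)` of (the `F`-algebra
generated by) `Γ` also stabilizes `W`, then the stabilizer `K` of `W` in `End_F(V)` is a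
field with `[K : F] = n`, and hence the field of definition satisfies `[F(W) : F] = n`. -/
theorem stabilizer_degree_of_group_action
    (F F' : Type*) [Field F] [CharZero F] [Field F'] [Algebra F F']
    (V : Type*) [AddCommGroup V] [Module F V] [FiniteDimensional F V]
    (n : ℕ) (hV : Module.finrank F V = n)
    (W : Submodule F' (F' ⊗[F] V))
    (hW : Module.finrank F' ↥W = 1)
    (hspan : Submodule.span F'
      (⋃ σ : F' ≃ₐ[F] F',
        (LinearMap.rTensor V σ.toLinearMap) '' (W : Set (F' ⊗[F] V))) = ⊤)
    (Γ : Subgroup (Module.End F V)ˣ)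
    (hΓ : ∀ g ∈ Γ, ∀ x ∈ W, LinearMap.baseChange F' ((g : (Module.End F V)ˣ) : Module.End F V) x ∈ W)
    (hcent : ∀ φ ∈ Subalgebra.centralizer F
        (Algebra.adjoin F ((fun g : (Module.End F V)ˣ => (g : Module.End F V)) ''
          (Γ : Set (Module.End F V)ˣ)) : Subalgebra F (Module.End F V)),
      ∀ x ∈ W, LinearMap.baseChange F' φ x ∈ W)
    (M : IntermediateField F F')
    (hdef : IsDefinedOver F F' V M W)
    (hmin : ∀ M' : IntermediateField F F', IsDefinedOver F F' V M' W → M ≤ M') :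
    (∃ K : Subalgebra F (Module.End F V),
      (K : Set (Module.End F V)) =
        {φ : Module.End F V | ∀ x ∈ W, LinearMap.baseChange F' φ x ∈ W} ∧
      IsField ↥K ∧ Module.finrank F ↥K = n) ∧
    Module.finrank F ↥M = n :=
  stabilizer_degree_of_group_action_general F F' V n hV W hW hspan Γ hΓ hcent M hdef hmin
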